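/- Let V be a multiplicative partial isometry on H⊗H and define Δ(X) = V(X⊗1)V* for X ∈ L(H). Then for every ω ∈ L(H)*, Δ(λ(ω)) lies in A⊗A, where λ(ω) = (ω⊗id)(V) and A = λ(L(H)*) is the right leg of V. -/

import Mathlib

open Matrix

namespace MPIpaper

variable {n : Type*} [Fintype n] [DecidableEq n]

noncomputable section

/-- `W₁₂ = W ⊗ 1` on `H ⊗ H ⊗ H`. -/
def leg12 (V : Matrix (n × n) (n × n) ℂ) : Matrix (n × n × n) (n × n × n) ℂ :=
  Matrix.of fun p q => V (p.1, p.2.1) (q.1, q.2.1) * (if p.2.2 = q.2.2 then (1 : ℂ) else 0)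

/-- `W₂₃ = 1 ⊗ W` on `H ⊗ H ⊗ H`. -/
def leg23 (V : Matrix (n × n) (n × n) ℂ) : Matrix (n × n × n) (n × n × n) ℂ :=
  Matrix.of fun p q => (if p.1 = q.1 then (1 : ℂ) else 0) * V p.2 q.2

/-- `W₁₃ = (1⊗Σ)(W⊗1)(1⊗Σ)` on `H ⊗ H ⊗ H`. -/
def leg13 (V : Matrix (n × n) (n × n) ℂ) : Matrix (n × n × n) (n × n × n) ℂ :=
  Matrix.of fun p q => V (p.1, p.2.2) (q.1, q.2.2) * (if p.2.1 = q.2.1 then (1 : ℂ) else 0)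

/-- A multiplicative partial isometry: `VV*V = V`, the pentagon equation, and the
three auxiliary (hexagon-type) equations. -/
def IsMPI (V : Matrix (n × n) (n × n) ℂ) : Prop :=
  V * Vᴴ * V = V ∧
  leg23 V * leg12 V = leg12 V * leg13 V * leg23 V ∧
  leg13 V * leg23 V * (leg23 V)ᴴ = (leg12 V)ᴴ * leg12 V * leg13 V ∧
  leg12 V * (leg12 V)ᴴ * leg23 V = leg23 V * leg12 V * (leg12 V)ᴴ ∧
  leg12 V * (leg23 V)ᴴ * leg23 V = (leg23 V)ᴴ * leg23 V * leg12 V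

/-- `λ(ω) = (ω ⊗ id)(V)`. -/
def lam (ω : Matrix n n ℂ →ₗ[ℂ] ℂ) (V : Matrix (n × n) (n × n) ℂ) : Matrix n n ℂ :=
  Matrix.of fun i j => ω (Matrix.of fun a b => V (a, i) (b, j))

/-- `ρ(ω) = (id ⊗ ω)(V)`. -/
def rho (ω : Matrix n n ℂ →ₗ[ℂ] ℂ) (V : Matrix (n × n) (n × n) ℂ) : Matrix n n ℂ :=
  Matrix.of fun i j => ω (Matrix.of fun a b => V (i, a) (j, b))

/-- `1 ⊗ X` on `H ⊗ H`. -/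
def oneTensor (X : Matrix n n ℂ) : Matrix (n × n) (n × n) ℂ :=
  Matrix.of fun p q => (if p.1 = q.1 then (1 : ℂ) else 0) * X p.2 q.2

/-- `X ⊗ 1` on `H ⊗ H`. -/
def tensorOne (X : Matrix n n ℂ) : Matrix (n × n) (n × n) ℂ :=
  Matrix.of fun p q => X p.1 q.1 * (if p.2 = q.2 then (1 : ℂ) else 0)

/-- `Δ(X) = V (X ⊗ 1) V*`. -/
def Delta (V : Matrix (n × n) (n × n) ℂ) (X : Matrix n n ℂ) : Matrix (n × n) (n × n) ℂ :=
  V * tensorOne X * Vᴴ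

/-- `Δ̂(X) = V* (1 ⊗ X) V`. -/
def hatDelta (V : Matrix (n × n) (n × n) ℂ) (X : Matrix n n ℂ) : Matrix (n × n) (n × n) ℂ :=
  Vᴴ * oneTensor X * V

/-- `(ω ⊗ ω')(W)` for an operator `W` on `H ⊗ H`. -/
def applyBoth (ω ω' : Matrix n n ℂ →ₗ[ℂ] ℂ) (W : Matrix (n × n) (n × n) ℂ) : ℂ :=
  ω (Matrix.of fun i j => ω' (Matrix.of fun k l => W (i, k) (j, l)))

end

/-!
Since `λ(ω) ⊗ 1 = (ω ⊗ id ⊗ id)(V₁₂)` and the slice map `ω ⊗ id ⊗ id` turns multiplication by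
`V₂₃` and `V₂₃*` into multiplication by `V` and `V*`, `Δ(λ(ω)) = (ω ⊗ id ⊗ id)(V₂₃ V₁₂ V₂₃*)`.
The pentagon equation, the first hexagon-type equation and `V₁₂ V₁₂* V₁₂ = V₁₂` turn
`V₂₃ V₁₂ V₂₃*` into `V₁₂ V₁₃`. Slicing `V₁₂ V₁₃` with the matrix-entry functional `e_ab` gives
`∑_c λ(e_ac) ⊗ λ(e_cb)`, and every `ω` is a linear combination of the `e_ab`.
-/

theorem leg12_mul (A B : Matrix (n × n) (n × n) ℂ) : leg12 (A * B) = leg12 A * leg12 B := by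
  ext ⟨p1, p2, p3⟩ ⟨q1, q2, q3⟩
  simp [leg12, mul_apply, Fintype.sum_prod_type, mul_ite, ite_mul]

omit [Fintype n] in
theorem leg12_conjTranspose (A : Matrix (n × n) (n × n) ℂ) : (leg12 A)ᴴ = leg12 Aᴴ := by
  ext ⟨p1, p2, p3⟩ ⟨q1, q2, q3⟩
  by_cases h : p3 = q3 <;> simp [leg12, conjTranspose_apply, h, eq_comm]

theorem IsMPI.leg23_mul_leg12_mul_leg23_conjTranspose {V : Matrix (n × n) (n × n) ℂ}
    (hV : IsMPI V) : leg23 V * leg12 V * (leg23 V)ᴴ = leg12 V * leg13 V := by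
  obtain ⟨hpartial, hpentagon, hhexagon, -⟩ := hV
  have hpartial12 : leg12 V * (leg12 V)ᴴ * leg12 V = leg12 V := by
    rw [leg12_conjTranspose, ← leg12_mul, ← leg12_mul, hpartial]
  calc leg23 V * leg12 V * (leg23 V)ᴴ
      = leg12 V * (leg13 V * leg23 V * (leg23 V)ᴴ) := by rw [hpentagon]; simp only [mul_assoc]
    _ = leg12 V * (leg12 V)ᴴ * leg12 V * leg13 V := by rw [hhexagon]; simp only [mul_assoc]
    _ = leg12 V * leg13 V := by rw [hpartial12]

/-- The slice map `ω ⊗ id ⊗ id` on `L(H ⊗ H ⊗ H)`. -/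
noncomputable def leftSlice (ω : Matrix n n ℂ →ₗ[ℂ] ℂ) (W : Matrix (n × n × n) (n × n × n) ℂ) :
    Matrix (n × n) (n × n) ℂ :=
  Matrix.of fun p q => ω (Matrix.of fun a b => W (a, p.1, p.2) (b, q.1, q.2))

theorem _root_.LinearMap.apply_matrix_eq_sum_single {m k R M : Type*} [Fintype m] [Fintype k]
    [DecidableEq m] [DecidableEq k] [CommSemiring R] [AddCommMonoid M] [Module R M]
    (f : Matrix m k R →ₗ[R] M) (A : Matrix m k R) :
    f A = ∑ i, ∑ j, A i j • f (Matrix.single i j 1) := by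
  conv_lhs => rw [Matrix.matrix_eq_sum_single A]
  simp only [map_sum, ← _root_.map_smul, Matrix.smul_single, smul_eq_mul, mul_one]

theorem leftSlice_eq_sum_entryLinearMap (ω : Matrix n n ℂ →ₗ[ℂ] ℂ)
    (W : Matrix (n × n × n) (n × n × n) ℂ) :
    leftSlice ω W = ∑ a, ∑ b, ω (Matrix.single a b 1) • leftSlice (entryLinearMap ℂ ℂ a b) W := by
  ext p q
  simp only [leftSlice, of_apply, Matrix.sum_apply, Matrix.smul_apply, entryLinearMap_apply,
    smul_eq_mul]
  rw [ω.apply_matrix_eq_sum_single]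
  simp only [of_apply, smul_eq_mul, mul_comm]

theorem leftSlice_leg23_mul (ω : Matrix n n ℂ →ₗ[ℂ] ℂ) (V : Matrix (n × n) (n × n) ℂ)
    (W : Matrix (n × n × n) (n × n × n) ℂ) :
    leftSlice ω (leg23 V * W) = V * leftSlice ω W := by
  ext p q
  have hexpand : (Matrix.of fun a b => (leg23 V * W) (a, p.1, p.2) (b, q.1, q.2))
      = ∑ r : n × n, V p r • Matrix.of fun a b => W (a, r.1, r.2) (b, q.1, q.2) := by
    ext a b
    simp [leg23, mul_apply, Fintype.sum_prod_type, Matrix.sum_apply, ite_mul]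
  simp only [leftSlice, of_apply]
  rw [hexpand, map_sum]
  simp only [_root_.map_smul, smul_eq_mul, mul_apply, of_apply]

theorem leftSlice_mul_leg23_conjTranspose (ω : Matrix n n ℂ →ₗ[ℂ] ℂ)
    (V : Matrix (n × n) (n × n) ℂ) (W : Matrix (n × n × n) (n × n × n) ℂ) :
    leftSlice ω (W * (leg23 V)ᴴ) = leftSlice ω W * Vᴴ := by
  ext p q
  have hexpand : (Matrix.of fun a b => (W * (leg23 V)ᴴ) (a, p.1, p.2) (b, q.1, q.2))
      = ∑ r : n × n, star (V q r) • Matrix.of fun a b => W (a, p.1, p.2) (b, r.1, r.2) := by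
    ext a b
    simp [leg23, mul_apply, conjTranspose_apply, Fintype.sum_prod_type, Matrix.sum_apply, apply_ite,
      mul_comm]
  simp only [leftSlice, of_apply]
  rw [hexpand, map_sum]
  simp only [_root_.map_smul, smul_eq_mul, mul_apply, of_apply, conjTranspose_apply,
    mul_comm]

omit [Fintype n] in
theorem leftSlice_leg12 (ω : Matrix n n ℂ →ₗ[ℂ] ℂ) (V : Matrix (n × n) (n × n) ℂ) :
    leftSlice ω (leg12 V) = tensorOne (lam ω V) := by
  ext p q
  by_cases h : p.2 = q.2
  · simp [leftSlice, leg12, tensorOne, lam, h]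
  · simp [leftSlice, leg12, tensorOne, lam, h]
    exact map_zero ω

theorem Delta_lam_eq_leftSlice (ω : Matrix n n ℂ →ₗ[ℂ] ℂ) (V : Matrix (n × n) (n × n) ℂ) :
    Delta V (lam ω V) = leftSlice ω (leg23 V * leg12 V * (leg23 V)ᴴ) := by
  rw [leftSlice_mul_leg23_conjTranspose, leftSlice_leg23_mul, leftSlice_leg12, Delta]

theorem leftSlice_entryLinearMap_leg12_mul_leg13 (V : Matrix (n × n) (n × n) ℂ) (a b : n) :
    leftSlice (entryLinearMap ℂ ℂ a b) (leg12 V * leg13 V)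
      = ∑ c, kroneckerMap (· * ·) (lam (entryLinearMap ℂ ℂ a c) V)
          (lam (entryLinearMap ℂ ℂ c b) V) := by
  ext ⟨i, k⟩ ⟨j, l⟩
  simp [leftSlice, leg12, leg13, lam, mul_apply, Fintype.sum_prod_type, Matrix.sum_apply, mul_ite,
    ite_mul]

theorem statement8 (V : Matrix (n × n) (n × n) ℂ) (hV : IsMPI V)
    (ω : Matrix n n ℂ →ₗ[ℂ] ℂ) :
    Delta V (lam ω V) ∈
      Submodule.span ℂ {M : Matrix (n × n) (n × n) ℂ |
        ∃ ω₁ ω₂ : Matrix n n ℂ →ₗ[ℂ] ℂ,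
          M = Matrix.kroneckerMap (· * ·) (lam ω₁ V) (lam ω₂ V)} := by
  rw [Delta_lam_eq_leftSlice, hV.leg23_mul_leg12_mul_leg23_conjTranspose,
    leftSlice_eq_sum_entryLinearMap]
  refine Submodule.sum_mem _ fun a _ => Submodule.sum_mem _ fun b _ => Submodule.smul_mem _ _ ?_
  rw [leftSlice_entryLinearMap_leg12_mul_leg13]
  exact Submodule.sum_mem _ fun c _ => Submodule.subset_span ⟨_, _, rfl⟩

end MPIpaper
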